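/- arXiv:2005.01086 — 4 statements merged into one kernel-verified Lean document; each statement's English description precedes it below -/
import Mathlib

section
/- With the Khatri–Rao product ⊛ on block 2×2 matrices, if A and B are block 2×2 hermitian matrices and A ⊗ B is positive semidefinite, then A ⊛ B is positive semidefinite. In particular, if A and B are both positive semidefinite block 2×2 matrices, then A ⊛ B is positive semidefinite. -/
open Kronecker Matrix
open scoped ComplexOrder

/-! The Khatri–Rao product of block matrices is the principal submatrix of their Kronecker
product on the index pairs that lie in matching diagonal blocks, and principal submatrices of
positive semidefinite matrices are positive semidefinite. -/

namespace Matrix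

theorem fromBlocks_kronecker_fromBlocks_submatrix {α n₁ n₂ m₁ m₂ p₁ p₂ q₁ q₂ : Type*} [Mul α]
    (A₁₁ : Matrix n₁ m₁ α) (A₁₂ : Matrix n₁ m₂ α) (A₂₁ : Matrix n₂ m₁ α) (A₂₂ : Matrix n₂ m₂ α)
    (B₁₁ : Matrix p₁ q₁ α) (B₁₂ : Matrix p₁ q₂ α) (B₂₁ : Matrix p₂ q₁ α) (B₂₂ : Matrix p₂ q₂ α) :
    (fromBlocks A₁₁ A₁₂ A₂₁ A₂₂ ⊗ₖ fromBlocks B₁₁ B₁₂ B₂₁ B₂₂).submatrix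
        (Sum.elim (Prod.map Sum.inl Sum.inl) (Prod.map Sum.inr Sum.inr))
        (Sum.elim (Prod.map Sum.inl Sum.inl) (Prod.map Sum.inr Sum.inr)) =
      fromBlocks (A₁₁ ⊗ₖ B₁₁) (A₁₂ ⊗ₖ B₁₂) (A₂₁ ⊗ₖ B₂₁) (A₂₂ ⊗ₖ B₂₂) := by
  ext (⟨i, k⟩ | ⟨i, k⟩) (⟨j, l⟩ | ⟨j, l⟩) <;> rfl

theorem PosSemidef.fromBlocks_kronecker_of_kronecker_fromBlocks
    {R n₁ n₂ p₁ p₂ : Type*} [Ring R] [PartialOrder R] [StarRing R]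
    {A₁₁ : Matrix n₁ n₁ R} {A₁₂ : Matrix n₁ n₂ R} {A₂₁ : Matrix n₂ n₁ R} {A₂₂ : Matrix n₂ n₂ R}
    {B₁₁ : Matrix p₁ p₁ R} {B₁₂ : Matrix p₁ p₂ R} {B₂₁ : Matrix p₂ p₁ R} {B₂₂ : Matrix p₂ p₂ R}
    (h : (fromBlocks A₁₁ A₁₂ A₂₁ A₂₂ ⊗ₖ fromBlocks B₁₁ B₁₂ B₂₁ B₂₂).PosSemidef) :
    (fromBlocks (A₁₁ ⊗ₖ B₁₁) (A₁₂ ⊗ₖ B₁₂) (A₂₁ ⊗ₖ B₂₁) (A₂₂ ⊗ₖ B₂₂)).PosSemidef :=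
  fromBlocks_kronecker_fromBlocks_submatrix A₁₁ A₁₂ A₂₁ A₂₂ B₁₁ B₁₂ B₂₁ B₂₂ ▸ h.submatrix _

end Matrix

/-- If block 2×2 hermitian matrices `A`, `B` have `A ⊗ B` positive semidefinite, then the
Khatri–Rao product `A ⊛ B` is positive semidefinite; in particular this holds when `A` and
`B` are positive semidefinite. -/
theorem khatriRao_posSemidef (n m : ℕ)
    (A₁₁ A₁₂ A₂₁ A₂₂ : Matrix (Fin n) (Fin n) ℂ)
    (B₁₁ B₁₂ B₂₁ B₂₂ : Matrix (Fin m) (Fin m) ℂ) :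
    let A := Matrix.fromBlocks A₁₁ A₁₂ A₂₁ A₂₂
    let B := Matrix.fromBlocks B₁₁ B₁₂ B₂₁ B₂₂
    let KR := Matrix.fromBlocks (A₁₁ ⊗ₖ B₁₁) (A₁₂ ⊗ₖ B₁₂) (A₂₁ ⊗ₖ B₂₁) (A₂₂ ⊗ₖ B₂₂)
    (A.IsHermitian → B.IsHermitian → (A ⊗ₖ B).PosSemidef → KR.PosSemidef) ∧
    (A.PosSemidef → B.PosSemidef → KR.PosSemidef) :=
  ⟨fun _ _ hAB => hAB.fromBlocks_kronecker_of_kronecker_fromBlocks,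
    fun hA hB => (hA.kronecker hB).fromBlocks_kronecker_of_kronecker_fromBlocks⟩
end

section
/- Let T be a hermitian n×n matrix and W a positive semidefinite n×n matrix such that I − √W T √W is positive definite. Then W (I − T W)⁻¹ is well-defined and positive semidefinite; indeed W(I − TW)⁻¹ = √W (I − √W T √W)⁻¹ √W. -/
open Matrix
open scoped ComplexOrder

/-! With `S = √W` we have `W = S * S`, and the push-through identity
`S (1 - T S S)⁻¹ = (1 - S T S)⁻¹ S` rewrites `W (1 - T W)⁻¹` as `S (1 - S T S)⁻¹ S`, a congruence of
the positive definite `(1 - S T S)⁻¹` by the hermitian `S`. Invertibility of `1 - T W` comes from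
`det (1 - A B) = det (1 - B A)`. -/

/-- The positive semidefinite square root of a positive semidefinite matrix, as defined in
Mathlib (December 2024) under the name `Matrix.PosSemidef.sqrt`. -/
noncomputable def Matrix.PosSemidef.sqrt {n 𝕜 : Type*} [Fintype n] [RCLike 𝕜] [DecidableEq n]
    {A : Matrix n n 𝕜} (hA : A.PosSemidef) : Matrix n n 𝕜 :=
  hA.1.eigenvectorUnitary.1 * diagonal ((↑) ∘ (√·) ∘ hA.1.eigenvalues) *
    (star hA.1.eigenvectorUnitary : Matrix n n 𝕜)

namespace Matrix

section PushThrough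

variable {m n α : Type*} [Fintype m] [Fintype n] [DecidableEq m] [DecidableEq n] [CommRing α]

theorem isUnit_one_sub_mul_comm (A : Matrix m n α) (B : Matrix n m α) :
    IsUnit (1 - A * B) ↔ IsUnit (1 - B * A) := by
  rw [isUnit_iff_isUnit_det, isUnit_iff_isUnit_det, det_one_sub_mul_comm]

theorem mul_inv_one_sub_mul_comm (A : Matrix m n α) (B : Matrix n m α) :
    A * (1 - B * A)⁻¹ = (1 - A * B)⁻¹ * A := by
  have hdet : (1 - A * B).det = (1 - B * A).det := det_one_sub_mul_comm A B
  by_cases hAB : IsUnit (1 - A * B).det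
  · have hcomm : (1 - A * B) * A = A * (1 - B * A) := by
      simp only [Matrix.sub_mul, Matrix.mul_sub, Matrix.one_mul, Matrix.mul_one, Matrix.mul_assoc]
    calc A * (1 - B * A)⁻¹ = (1 - A * B)⁻¹ * ((1 - A * B) * A) * (1 - B * A)⁻¹ := by
          rw [nonsing_inv_mul_cancel_left _ A hAB]
      _ = (1 - A * B)⁻¹ * (A * (1 - B * A) * (1 - B * A)⁻¹) := by
          rw [hcomm, Matrix.mul_assoc]
      _ = (1 - A * B)⁻¹ * A := by
          rw [mul_nonsing_inv_cancel_right _ A (hdet ▸ hAB)]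
  -- Both inverses are the junk value `0`.
  · rw [nonsing_inv_apply_not_isUnit _ hAB, nonsing_inv_apply_not_isUnit _ (hdet ▸ hAB),
      Matrix.mul_zero, Matrix.zero_mul]

end PushThrough

namespace PosSemidef

variable {n 𝕜 : Type*} [Fintype n] [RCLike 𝕜] [DecidableEq n] {A : Matrix n n 𝕜}

theorem sqrt_eq_conjStarAlgAut (hA : A.PosSemidef) :
    hA.sqrt = Unitary.conjStarAlgAut 𝕜 _ hA.1.eigenvectorUnitary
      (diagonal ((↑) ∘ (√·) ∘ hA.1.eigenvalues)) :=
  rfl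

theorem sqrt_mul_self (hA : A.PosSemidef) : hA.sqrt * hA.sqrt = A := by
  conv_rhs => rw [hA.1.spectral_theorem]
  rw [sqrt_eq_conjStarAlgAut, ← map_mul, diagonal_mul_diagonal]
  congr 2
  funext i
  simp [← RCLike.ofReal_mul, Real.mul_self_sqrt (hA.eigenvalues_nonneg i)]

theorem sqrt_isHermitian (hA : A.PosSemidef) : hA.sqrt.IsHermitian := by
  rw [IsHermitian, ← star_eq_conjTranspose, sqrt_eq_conjStarAlgAut, ← map_star,
    star_eq_conjTranspose, diagonal_conjTranspose]
  congr 2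
  funext i
  simp

end PosSemidef

end Matrix

theorem resolvent_posSemidef_of_sqrt_posDef_general (n : ℕ)
    (T W : Matrix (Fin n) (Fin n) ℂ) (hW : W.PosSemidef)
    (h : (1 - hW.sqrt * T * hW.sqrt).PosDef) :
    IsUnit (1 - T * W) ∧ (W * (1 - T * W)⁻¹).PosSemidef ∧
      W * (1 - T * W)⁻¹ = hW.sqrt * (1 - hW.sqrt * T * hW.sqrt)⁻¹ * hW.sqrt := by
  set S := hW.sqrt
  have hSS : S * S = W := hW.sqrt_mul_self
  have hTW : T * W = T * S * S := by rw [Matrix.mul_assoc, hSS]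
  have hSTS : S * T * S = S * (T * S) := Matrix.mul_assoc _ _ _
  have hresolvent : W * (1 - T * W)⁻¹ = S * (1 - S * T * S)⁻¹ * S := by
    rw [hTW, ← hSS, hSTS, Matrix.mul_assoc, mul_inv_one_sub_mul_comm, Matrix.mul_assoc]
  refine ⟨?_, ?_, hresolvent⟩
  · rw [hTW, isUnit_one_sub_mul_comm, ← hSTS]
    exact h.isUnit
  · have hpsd := h.inv.posSemidef.conjTranspose_mul_mul_same S
    rwa [hW.sqrt_isHermitian.eq, ← hresolvent] at hpsd

/-- If `T` is hermitian, `W ⪰ 0` and `I − √W T √W ≻ 0`, then `I − TW` is invertible,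
`W (I − TW)⁻¹` is positive semidefinite, and `W(I − TW)⁻¹ = √W (I − √W T √W)⁻¹ √W`. -/
theorem resolvent_posSemidef_of_sqrt_posDef (n : ℕ)
    (T W : Matrix (Fin n) (Fin n) ℂ) (hT : T.IsHermitian) (hW : W.PosSemidef)
    (h : (1 - hW.sqrt * T * hW.sqrt).PosDef) :
    IsUnit (1 - T * W) ∧ (W * (1 - T * W)⁻¹).PosSemidef ∧
      W * (1 - T * W)⁻¹ = hW.sqrt * (1 - hW.sqrt * T * hW.sqrt)⁻¹ * hW.sqrt :=
  resolvent_posSemidef_of_sqrt_posDef_general n T W hW h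
end

section
/- If a function f on pairs of hermitian matrices satisfies f(V*(X,Y)V) ⪯ V* f(X,Y) V for all xy-pairs ((X,Y),V), then f is convex in x: for all hermitian X₁, X₂, Y of the same size, f((X₁+X₂)/2, Y) ⪯ (f(X₁,Y)+f(X₂,Y))/2. -/
/-! Compressing by the isometry `V = (I; I)/√2` averages the two diagonal blocks of a block
matrix. For `X = X₁ ⊕ X₂` and `Y ⊕ Y` the compression is multiplicative, because `Y ⊕ Y`
compresses to `Y` and `(X₁ ⊕ X₂)(Y ⊕ Y) = X₁Y ⊕ X₂Y`; so `((X₁ ⊕ X₂, Y ⊕ Y), V)` is an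
`xy`-pair, and the hypothesis on `f`, combined with `f(X₁ ⊕ X₂, Y ⊕ Y) = f(X₁,Y) ⊕ f(X₂,Y)`,
is exactly midpoint convexity in `x`. -/

open Matrix
open scoped ComplexOrder

namespace Matrix

variable {𝕜 : Type*} [RCLike 𝕜] {N : Type*} [DecidableEq N]

noncomputable def averagingIsometry (𝕜 N : Type*) [RCLike 𝕜] [DecidableEq N] :
    Matrix (N ⊕ N) N 𝕜 :=
  (Real.sqrt 2)⁻¹ • fromRows 1 1

lemma conjTranspose_averagingIsometry :
    (averagingIsometry 𝕜 N)ᴴ = (Real.sqrt 2)⁻¹ • fromCols 1 1 := by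
  simp [averagingIsometry, conjTranspose_smul, conjTranspose_fromRows_eq_fromCols_conjTranspose]

variable [Fintype N]

lemma averagingIsometry_sandwich (A B C D : Matrix N N 𝕜) :
    (averagingIsometry 𝕜 N)ᴴ * fromBlocks A B C D * averagingIsometry 𝕜 N
      = ((1 : ℝ) / 2) • (A + B + C + D) := by
  have h : (Real.sqrt 2)⁻¹ * (Real.sqrt 2)⁻¹ = (1 : ℝ) / 2 := by
    rw [← mul_inv, Real.mul_self_sqrt zero_le_two, one_div]
  rw [conjTranspose_averagingIsometry, averagingIsometry]
  simp only [Matrix.smul_mul, Matrix.mul_smul, smul_smul, h, fromCols_mul_fromBlocks,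
    fromCols_mul_fromRows, Matrix.one_mul, Matrix.mul_one]
  abel_nf

lemma averagingIsometry_sandwich_fromBlocks_diagonal (A B : Matrix N N 𝕜) :
    (averagingIsometry 𝕜 N)ᴴ * fromBlocks A 0 0 B * averagingIsometry 𝕜 N
      = ((1 : ℝ) / 2) • (A + B) := by
  simp [averagingIsometry_sandwich]

lemma averagingIsometry_sandwich_fromBlocks_self (A : Matrix N N 𝕜) :
    (averagingIsometry 𝕜 N)ᴴ * fromBlocks A 0 0 A * averagingIsometry 𝕜 N = A := by
  rw [averagingIsometry_sandwich_fromBlocks_diagonal, ← two_smul ℝ A, smul_smul]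
  norm_num

lemma conjTranspose_averagingIsometry_mul_self :
    (averagingIsometry 𝕜 N)ᴴ * averagingIsometry 𝕜 N = 1 := by
  simpa [fromBlocks_one] using averagingIsometry_sandwich_fromBlocks_self (1 : Matrix N N 𝕜)

/-- `(X₁ ⊕ X₂, Y ⊕ Y)` with the averaging isometry is an `xy`-pair. -/
lemma averagingIsometry_sandwich_mul_fromBlocks_self (X₁ X₂ Y : Matrix N N 𝕜) :
    (averagingIsometry 𝕜 N)ᴴ * (fromBlocks X₁ 0 0 X₂ * fromBlocks Y 0 0 Y)
        * averagingIsometry 𝕜 N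
      = ((averagingIsometry 𝕜 N)ᴴ * fromBlocks X₁ 0 0 X₂ * averagingIsometry 𝕜 N)
        * ((averagingIsometry 𝕜 N)ᴴ * fromBlocks Y 0 0 Y * averagingIsometry 𝕜 N) := by
  rw [fromBlocks_multiply, averagingIsometry_sandwich_fromBlocks_self,
    averagingIsometry_sandwich_fromBlocks_diagonal]
  simp only [Matrix.mul_zero, Matrix.zero_mul, add_zero, zero_add]
  rw [averagingIsometry_sandwich_fromBlocks_diagonal, Matrix.smul_mul, Matrix.add_mul]

end Matrix

/-- If a free function `f` of two hermitian matrix variables respects direct sums and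
satisfies `f(V*(X,Y)V) ⪯ V* f(X,Y) V` for all `xy`-pairs `((X,Y),V)`, then `f` is convex
in the first variable: `f((X₁+X₂)/2, Y) ⪯ (f(X₁,Y) + f(X₂,Y))/2`. -/
theorem xy_convex_implies_convex_in_x
    (f : ∀ (N : Type) [Fintype N] [DecidableEq N],
      Matrix N N ℂ → Matrix N N ℂ → Matrix N N ℂ)
    (hsum : ∀ (N : Type) [Fintype N] [DecidableEq N] (X₁ X₂ Y : Matrix N N ℂ),
      f (N ⊕ N) (Matrix.fromBlocks X₁ 0 0 X₂) (Matrix.fromBlocks Y 0 0 Y)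
        = Matrix.fromBlocks (f N X₁ Y) 0 0 (f N X₂ Y))
    (hconv : ∀ (N M : Type) [Fintype N] [DecidableEq N] [Fintype M] [DecidableEq M]
      (X Y : Matrix N N ℂ), X.IsHermitian → Y.IsHermitian →
      ∀ V : Matrix N M ℂ, Vᴴ * V = 1 →
        Vᴴ * (X * Y) * V = (Vᴴ * X * V) * (Vᴴ * Y * V) →
        (Vᴴ * f N X Y * V - f M (Vᴴ * X * V) (Vᴴ * Y * V)).PosSemidef)
    (n : ℕ) (X₁ X₂ Y : Matrix (Fin n) (Fin n) ℂ)
    (h₁ : X₁.IsHermitian) (h₂ : X₂.IsHermitian) (hY : Y.IsHermitian) :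
    (((1 : ℝ) / 2) • (f (Fin n) X₁ Y + f (Fin n) X₂ Y) -
      f (Fin n) (((1 : ℝ) / 2) • (X₁ + X₂)) Y).PosSemidef := by
  have key := hconv (Fin n ⊕ Fin n) (Fin n) (fromBlocks X₁ 0 0 X₂) (fromBlocks Y 0 0 Y)
    (h₁.fromBlocks conjTranspose_zero h₂) (hY.fromBlocks conjTranspose_zero hY)
    (averagingIsometry ℂ (Fin n)) conjTranspose_averagingIsometry_mul_self
    (averagingIsometry_sandwich_mul_fromBlocks_self X₁ X₂ Y)
  rwa [hsum, averagingIsometry_sandwich_fromBlocks_diagonal,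
    averagingIsometry_sandwich_fromBlocks_diagonal,
    averagingIsometry_sandwich_fromBlocks_self] at key
end

section
/- Let r be a symmetric univariate matrix function given by a minimal symmetric realization r(x) = c*(J − Tx)⁻¹ c with J a signature matrix and T hermitian, evaluated at hermitian matrices X with J⊗I − T⊗X invertible. Then the second directional derivative (Hessian) of r at X in direction H equals 2 c* R(X) (T⊗H) R(X) (T⊗H) R(X) c, where R(X) = (J⊗I − T⊗X)⁻¹; in particular, if V_T* R(X) V_T ⪰ 0 for V_T the inclusion of range(T), then the Hessian is positive semidefinite at X in every direction H. -/
/-!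
Along the line `t ↦ X + tH` the resolvent is `F t = (A - tB)⁻¹` with `A = J⊗I - T⊗X` and
`B = T⊗H`; it satisfies `F' = F B F`, hence `F'' = 2 F B F B F`, and `r` is a fixed linear
functional of `F`. For positivity, `V = V_T ⊗ I` satisfies `V Vᴴ B = B`, so the Hessian is
`2 Lᴴ (Vᴴ R(X) V) L` with `L = Vᴴ B R(X) (c ⊗ I)`.
-/

open Matrix Kronecker
open scoped ComplexOrder Topology

theorem ContinuousLinearMap.iteratedDeriv_comp_left {𝕜 F G : Type*}
    [NontriviallyNormedField 𝕜] [NormedAddCommGroup F] [NormedSpace 𝕜 F]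
    [NormedAddCommGroup G] [NormedSpace 𝕜 G] (g : F →L[𝕜] G) {f : 𝕜 → F} {x : 𝕜}
    {n : WithTop ℕ∞} (hf : ContDiffAt 𝕜 n f x) {i : ℕ} (hi : i ≤ n) :
    iteratedDeriv i (g ∘ f) x = g (iteratedDeriv i f x) := by
  simp only [iteratedDeriv_eq_iteratedFDeriv, g.iteratedFDeriv_comp_left hf hi,
    ContinuousLinearMap.compContinuousMultilinearMap_coe, Function.comp_apply]

section Resolvent

variable {𝕜 R : Type*} [NontriviallyNormedField 𝕜] [NormedRing R] [NormedAlgebra 𝕜 R]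
  [HasSummableGeomSeries R] {a b : R} {t : 𝕜}

theorem hasDerivAt_ringInverse_sub_smul (h : IsUnit (a - t • b)) :
    HasDerivAt (fun s : 𝕜 => Ring.inverse (a - s • b))
      (Ring.inverse (a - t • b) * b * Ring.inverse (a - t • b)) t := by
  obtain ⟨u, hu⟩ := h
  have hline : HasDerivAt (fun s : 𝕜 => a - s • b) (-b) t := by
    simpa using ((hasDerivAt_id t).smul_const b).const_sub a
  have hinv := (hu ▸ hasFDerivAt_ringInverse (𝕜 := 𝕜) u).comp_hasDerivAt t hline
  rw [← hu, Ring.inverse_unit]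
  simpa [Function.comp_def, ContinuousLinearMap.mulLeftRight_apply] using hinv

theorem contDiffAt_ringInverse_sub_smul (h : IsUnit (a - t • b)) {n : WithTop ℕ∞} :
    ContDiffAt 𝕜 n (fun s : 𝕜 => Ring.inverse (a - s • b)) t := by
  obtain ⟨u, hu⟩ := h
  exact (hu ▸ contDiffAt_ringInverse 𝕜 u).comp t
    (contDiffAt_const.sub (contDiffAt_id.smul contDiffAt_const))

theorem iteratedDeriv_two_ringInverse_sub_smul (h : IsUnit (a - t • b)) :
    iteratedDeriv 2 (fun s : 𝕜 => Ring.inverse (a - s • b)) t =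
      2 * (Ring.inverse (a - t • b) * b * Ring.inverse (a - t • b) * b *
        Ring.inverse (a - t • b)) := by
  set F : 𝕜 → R := fun s => Ring.inverse (a - s • b)
  have hunits : ∀ᶠ s in 𝓝 t, IsUnit (a - s • b) :=
    (continuous_const.sub (continuous_id.smul continuous_const)).continuousAt.eventually
      (Units.isOpen.mem_nhds h)
  have hderiv : deriv F =ᶠ[𝓝 t] fun s => F s * b * F s :=
    hunits.mono fun s hs => (hasDerivAt_ringInverse_sub_smul hs).deriv
  have hF : HasDerivAt F (F t * b * F t) t := hasDerivAt_ringInverse_sub_smul h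
  have hF' : HasDerivAt (fun s => F s * b * F s)
      (F t * b * F t * b * F t + F t * b * (F t * b * F t)) t := (hF.mul_const b).mul hF
  rw [iteratedDeriv_succ, iteratedDeriv_one, hderiv.deriv_eq, hF'.deriv]
  simp only [F, two_mul, mul_assoc]

end Resolvent

namespace Matrix

variable {l m n p k α : Type*}

theorem IsHermitian.kronecker [CommMagma α] [AddCommMonoid α] [StarMul α]
    {A : Matrix m m α} {B : Matrix n n α}
    (hA : A.IsHermitian) (hB : B.IsHermitian) : (A ⊗ₖ B).IsHermitian := by
  rw [IsHermitian, conjTranspose_kronecker, hA.eq, hB.eq]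

def mulLeftRightLinearMap (S : Type*) [Semiring S] [Fintype m] [Fintype n] [Semiring α]
    [Module S α] [SMulCommClass S α α] [IsScalarTower S α α]
    (P : Matrix l m α) (Q : Matrix n p α) : Matrix m n α →ₗ[S] Matrix l p α where
  toFun M := P * M * Q
  map_add' M N := by simp only [Matrix.mul_add, Matrix.add_mul]
  map_smul' c M := by simp only [Matrix.mul_smul, Matrix.smul_mul, RingHom.id_apply]

theorem posSemidef_sandwich_of_compression [Fintype l] [Fintype m] [Fintype k] [CommRing α]
    [PartialOrder α] [StarRing α] {R B : Matrix m m α} {V : Matrix m k α} (C : Matrix m l α)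
    (hR : R.IsHermitian) (hB : B.IsHermitian) (hV : V * Vᴴ * B = B)
    (hRV : (Vᴴ * R * V).PosSemidef) : (Cᴴ * R * B * R * B * R * C).PosSemidef := by
  have hV' : B * (V * Vᴴ) = B := by
    simpa only [conjTranspose_mul, conjTranspose_conjTranspose, hB.eq, Matrix.mul_assoc]
      using congrArg conjTranspose hV
  convert hRV.conjTranspose_mul_mul_same (Vᴴ * B * R * C) using 1
  have hVB (W : Matrix m l α) : V * (Vᴴ * (B * W)) = B * W := by
    rw [← Matrix.mul_assoc, ← Matrix.mul_assoc, hV]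
  have hBV (W : Matrix m l α) : B * (V * (Vᴴ * W)) = B * W := by
    rw [← Matrix.mul_assoc V, ← Matrix.mul_assoc, hV']
  simp only [conjTranspose_mul, conjTranspose_conjTranspose, hR.eq, hB.eq, Matrix.mul_assoc,
    hVB, hBV]

end Matrix

section Hessian

attribute [local instance] Matrix.linftyOpNormedAddCommGroup Matrix.linftyOpNormedSpace
  Matrix.linftyOpNormedRing Matrix.linftyOpNormedAlgebra

theorem realization_hessian_formula_and_positivity_general (e n : ℕ)
    (J T : Matrix (Fin e) (Fin e) ℂ) (hJ : J.IsHermitian)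
    (hT : T.IsHermitian) (c : Fin e → ℂ)
    (X H : Matrix (Fin n) (Fin n) ℂ) (hX : X.IsHermitian) (hH : H.IsHermitian)
    (hdom : IsUnit (J ⊗ₖ (1 : Matrix (Fin n) (Fin n) ℂ) - T ⊗ₖ X)) :
    let Cm : Matrix (Fin e) (Fin 1) ℂ := Matrix.of fun i _ => c i
    let CK : Matrix (Fin e × Fin n) (Fin 1 × Fin n) ℂ :=
      Cm ⊗ₖ (1 : Matrix (Fin n) (Fin n) ℂ)
    let R : Matrix (Fin n) (Fin n) ℂ → Matrix (Fin e × Fin n) (Fin e × Fin n) ℂ :=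
      fun Z => (J ⊗ₖ (1 : Matrix (Fin n) (Fin n) ℂ) - T ⊗ₖ Z)⁻¹
    let r : Matrix (Fin n) (Fin n) ℂ → Matrix (Fin 1 × Fin n) (Fin 1 × Fin n) ℂ :=
      fun Z => CKᴴ * R Z * CK
    let Hess : Matrix (Fin 1 × Fin n) (Fin 1 × Fin n) ℂ :=
      (2 : ℂ) • (CKᴴ * R X * (T ⊗ₖ H) * R X * (T ⊗ₖ H) * R X * CK)
    (∀ i j, iteratedDeriv 2 (fun t : ℝ => r (X + t • H) i j) 0 = Hess i j) ∧
    (∀ (d : ℕ) (VT : Matrix (Fin e) (Fin d) ℂ), VTᴴ * VT = 1 → VT * VTᴴ * T = T →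
      ((VTᴴ ⊗ₖ (1 : Matrix (Fin n) (Fin n) ℂ)) * R X *
        (VT ⊗ₖ (1 : Matrix (Fin n) (Fin n) ℂ))).PosSemidef →
      Hess.PosSemidef) := by
  intro Cm CK R r Hess
  set A := J ⊗ₖ (1 : Matrix (Fin n) (Fin n) ℂ) - T ⊗ₖ X
  set B := T ⊗ₖ H
  refine ⟨fun i j => ?_, fun d VT _ hVT hcompress => ?_⟩
  · let φ : Matrix (Fin e × Fin n) (Fin e × Fin n) ℂ →L[ℝ] ℂ :=
      LinearMap.toContinuousLinearMap (entryLinearMap ℝ ℂ i j ∘ₗ mulLeftRightLinearMap ℝ CKᴴ CK)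
    have hφ (M) : φ M = (CKᴴ * M * CK) i j := rfl
    have hr : (fun t : ℝ => r (X + t • H) i j) = φ ∘ fun t => Ring.inverse (A - t • B) := by
      funext t
      simp [hφ, r, R, A, B, kronecker_add, kronecker_smul, sub_add_eq_sub_sub,
        nonsing_inv_eq_ringInverse]
    have h0 : IsUnit (A - (0 : ℝ) • B) := by simpa using hdom
    rw [hr]
    refine (φ.iteratedDeriv_comp_left (contDiffAt_ringInverse_sub_smul h0) le_top).trans ?_
    rw [iteratedDeriv_two_ringInverse_sub_smul h0]
    refine (hφ _).trans ?_
    simp [Hess, R, A, B, nonsing_inv_eq_ringInverse, Matrix.mul_assoc, two_mul, Matrix.add_mul,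
      Matrix.mul_add]
  · set V := VT ⊗ₖ (1 : Matrix (Fin n) (Fin n) ℂ)
    have hA : A.IsHermitian := (hJ.kronecker isHermitian_one).sub (hT.kronecker hX)
    have hVconj : Vᴴ = VTᴴ ⊗ₖ (1 : Matrix (Fin n) (Fin n) ℂ) := by
      rw [conjTranspose_kronecker, conjTranspose_one]
    have hV : V * Vᴴ * B = B := by
      rw [hVconj, ← mul_kronecker_mul, ← mul_kronecker_mul, hVT, Matrix.one_mul, Matrix.one_mul]
    refine PosSemidef.smul ?_ (by norm_num)
    exact posSemidef_sandwich_of_compression CK hA.inv (hT.kronecker hH) hV (hVconj ▸ hcompress)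

/-- For a symmetric realization `r(x) = c*(J − Tx)⁻¹c` (with `J² = I`, `J, T` hermitian),
the Hessian of `r` at a hermitian `X` in the hermitian direction `H` equals
`2 c* R(X) (T⊗H) R(X) (T⊗H) R(X) c` where `R(X) = (J⊗I − T⊗X)⁻¹`; and if
`V_T* R(X) V_T ⪰ 0` for `V_T` an isometry containing the range of `T`, then this Hessian
is positive semidefinite. -/
theorem realization_hessian_formula_and_positivity (e n : ℕ)
    (J T : Matrix (Fin e) (Fin e) ℂ) (hJ : J.IsHermitian) (hJ2 : J * J = 1)
    (hT : T.IsHermitian) (c : Fin e → ℂ)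
    (X H : Matrix (Fin n) (Fin n) ℂ) (hX : X.IsHermitian) (hH : H.IsHermitian)
    (hdom : IsUnit (J ⊗ₖ (1 : Matrix (Fin n) (Fin n) ℂ) - T ⊗ₖ X)) :
    let Cm : Matrix (Fin e) (Fin 1) ℂ := Matrix.of fun i _ => c i
    let CK : Matrix (Fin e × Fin n) (Fin 1 × Fin n) ℂ :=
      Cm ⊗ₖ (1 : Matrix (Fin n) (Fin n) ℂ)
    let R : Matrix (Fin n) (Fin n) ℂ → Matrix (Fin e × Fin n) (Fin e × Fin n) ℂ :=
      fun Z => (J ⊗ₖ (1 : Matrix (Fin n) (Fin n) ℂ) - T ⊗ₖ Z)⁻¹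
    let r : Matrix (Fin n) (Fin n) ℂ → Matrix (Fin 1 × Fin n) (Fin 1 × Fin n) ℂ :=
      fun Z => CKᴴ * R Z * CK
    let Hess : Matrix (Fin 1 × Fin n) (Fin 1 × Fin n) ℂ :=
      (2 : ℂ) • (CKᴴ * R X * (T ⊗ₖ H) * R X * (T ⊗ₖ H) * R X * CK)
    (∀ i j, iteratedDeriv 2 (fun t : ℝ => r (X + t • H) i j) 0 = Hess i j) ∧
    (∀ (d : ℕ) (VT : Matrix (Fin e) (Fin d) ℂ), VTᴴ * VT = 1 → VT * VTᴴ * T = T →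
      ((VTᴴ ⊗ₖ (1 : Matrix (Fin n) (Fin n) ℂ)) * R X *
        (VT ⊗ₖ (1 : Matrix (Fin n) (Fin n) ℂ))).PosSemidef →
      Hess.PosSemidef) :=
  realization_hessian_formula_and_positivity_general e n J T hJ hT c X H hX hH hdom

end Hessian
end
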